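/- arXiv:2508.19347 — 2 statements merged into one kernel-verified Lean document; each statement's English description precedes it below -/
import Mathlib

section
/- Let F : X → Y be a bounded linear operator between Hilbert spaces with x† = F*ω for some ω ∈ Y. Let x_α be the Tikhonov-regularized solution x_α = (F*F + αI)⁻¹ F* y^δ with ‖y^δ − F x†‖ ≤ δ. Then ‖x_α − x†‖ ≤ δ/(2√α) + (√α/2)‖ω‖, and choosing α = δ/‖ω‖ yields ‖x_α − x†‖ ≤ √(δ‖ω‖). -/
/-!
Write `e = x_α - x†` and `r = y^δ - F x†`. The normal equation together with the source condition
gives `F*F e + α e = F*(r - α ω)`; pairing with `e` yields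
`‖F e‖² + α‖e‖² ≤ ‖r - α ω‖ ‖F e‖ ≤ (δ + α‖ω‖) ‖F e‖`.
Completing the square in `‖F e‖` leaves `4α‖e‖² ≤ (δ + α‖ω‖)²`, i.e. the stated bound, and at
`α = δ/‖ω‖` its two terms coincide.
-/

open scoped RealInnerProductSpace

theorem two_mul_sqrt_mul_le_of_sq_add_mul_sq_le {s t c α : ℝ} (hα : 0 < α) (hs : 0 ≤ s)
    (hc : 0 ≤ c) (h : t ^ 2 + α * s ^ 2 ≤ c * t) : 2 * Real.sqrt α * s ≤ c := by
  have hsq : (2 * Real.sqrt α * s) ^ 2 ≤ c ^ 2 := by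
    rw [mul_pow, mul_pow, Real.sq_sqrt hα.le]
    nlinarith [sq_nonneg (c - 2 * t)]
  exact (pow_le_pow_iff_left₀ (by positivity) hc two_ne_zero).mp hsq

section Tikhonov

variable {X Y : Type*} [NormedAddCommGroup X] [InnerProductSpace ℝ X] [CompleteSpace X]
  [NormedAddCommGroup Y] [InnerProductSpace ℝ Y] [CompleteSpace Y]

theorem norm_sq_add_mul_norm_sq_le_of_adjoint_eq (F : X →L[ℝ] Y) {e : X} {z : Y} (α : ℝ)
    (h : ContinuousLinearMap.adjoint F (F e) + α • e = ContinuousLinearMap.adjoint F z) :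
    ‖F e‖ ^ 2 + α * ‖e‖ ^ 2 ≤ ‖z‖ * ‖F e‖ := by
  have hpair := congrArg (fun x => ⟪x, e⟫) h
  simp only [inner_add_left, real_inner_smul_left, ContinuousLinearMap.adjoint_inner_left,
    real_inner_self_eq_norm_sq] at hpair
  exact hpair ▸ real_inner_le_norm z (F e)

theorem tikhonov_error_normal_eq (F : X →L[ℝ] Y) {ω yδ : Y} {xdag xα : X} {α : ℝ}
    (hsource : xdag = ContinuousLinearMap.adjoint F ω)
    (hxα : ContinuousLinearMap.adjoint F (F xα) + α • xα = ContinuousLinearMap.adjoint F yδ) :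
    ContinuousLinearMap.adjoint F (F (xα - xdag)) + α • (xα - xdag) =
      ContinuousLinearMap.adjoint F (yδ - F xdag - α • ω) := by
  rw [map_sub, map_sub, map_sub, map_smul, map_sub, ← hxα, ← hsource, smul_sub]
  abel

theorem two_mul_sqrt_mul_norm_tikhonov_error_le (F : X →L[ℝ] Y) {ω yδ : Y} {xdag xα : X}
    {δ α : ℝ} (hsource : xdag = ContinuousLinearMap.adjoint F ω) (hnoise : ‖yδ - F xdag‖ ≤ δ)
    (hα : 0 < α)
    (hxα : ContinuousLinearMap.adjoint F (F xα) + α • xα = ContinuousLinearMap.adjoint F yδ) :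
    2 * Real.sqrt α * ‖xα - xdag‖ ≤ δ + α * ‖ω‖ := by
  have hquad := norm_sq_add_mul_norm_sq_le_of_adjoint_eq F α
    (tikhonov_error_normal_eq F hsource hxα)
  have hdata : ‖yδ - F xdag - α • ω‖ ≤ δ + α * ‖ω‖ := by
    calc ‖yδ - F xdag - α • ω‖ ≤ ‖yδ - F xdag‖ + ‖α • ω‖ := norm_sub_le _ _
      _ ≤ δ + α * ‖ω‖ := by rw [norm_smul, Real.norm_of_nonneg hα.le]; gcongr
  refine two_mul_sqrt_mul_le_of_sq_add_mul_sq_le hα (norm_nonneg _)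
    (by positivity [(norm_nonneg _).trans hnoise]) (hquad.trans ?_)
  gcongr

end Tikhonov

theorem add_mul_div_two_mul_sqrt_eq (δ α w : ℝ) (hα : 0 < α) :
    (δ + α * w) / (2 * Real.sqrt α) = δ / (2 * Real.sqrt α) + (Real.sqrt α / 2) * w := by
  have hsqrt : Real.sqrt α ≠ 0 := (Real.sqrt_pos.mpr hα).ne'
  rw [add_div]
  field_simp
  rw [Real.sq_sqrt hα.le]

theorem tikhonov_bound_eq_sqrt_of_eq_div {δ α w : ℝ} (hα : 0 < α) (hw : 0 ≤ w)
    (hαδ : α = δ / w) : δ / (2 * Real.sqrt α) + (Real.sqrt α / 2) * w = Real.sqrt (δ * w) := by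
  have hw0 : w ≠ 0 := by rintro rfl; rw [div_zero] at hαδ; exact hα.ne' hαδ
  obtain rfl : δ = α * w := by rw [hαδ, div_mul_cancel₀ δ hw0]
  rw [← add_mul_div_two_mul_sqrt_eq _ _ _ hα, mul_assoc, Real.sqrt_mul hα.le,
    Real.sqrt_mul_self hw]
  have hsqrt : Real.sqrt α ≠ 0 := (Real.sqrt_pos.mpr hα).ne'
  field_simp
  rw [Real.sq_sqrt hα.le]
  ring

theorem stmt14_general {X Y : Type*} [NormedAddCommGroup X] [InnerProductSpace ℝ X] [CompleteSpace X]
    [NormedAddCommGroup Y] [InnerProductSpace ℝ Y] [CompleteSpace Y]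
    (F : X →L[ℝ] Y) (ω : Y) (xdag : X)
    (hsource : xdag = ContinuousLinearMap.adjoint F ω)
    (yδ : Y) (δ : ℝ) (hnoise : ‖yδ - F xdag‖ ≤ δ)
    (α : ℝ) (hα : 0 < α) (xα : X)
    (hxα : ContinuousLinearMap.adjoint F (F xα) + α • xα =
      ContinuousLinearMap.adjoint F yδ) :
    ‖xα - xdag‖ ≤ δ / (2 * Real.sqrt α) + (Real.sqrt α / 2) * ‖ω‖ ∧
    (α = δ / ‖ω‖ → ‖xα - xdag‖ ≤ Real.sqrt (δ * ‖ω‖)) := by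
  have hbound : ‖xα - xdag‖ ≤ δ / (2 * Real.sqrt α) + (Real.sqrt α / 2) * ‖ω‖ := by
    rw [← add_mul_div_two_mul_sqrt_eq δ α ‖ω‖ hα, le_div_iff₀' (by positivity)]
    exact two_mul_sqrt_mul_norm_tikhonov_error_le F hsource hnoise hα hxα
  exact ⟨hbound, fun hαδ => tikhonov_bound_eq_sqrt_of_eq_div hα (norm_nonneg ω) hαδ ▸ hbound⟩

/-- convergence rate for linear Tikhonov regularization under the source
condition `x† = F* ω`. The regularized solution `x_α = (F*F + αI)⁻¹ F* y^δ`
(characterized by the normal equation `F*(F x_α) + α x_α = F* y^δ`) with data error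
`‖y^δ − F x†‖ ≤ δ` satisfies `‖x_α − x†‖ ≤ δ/(2√α) + (√α/2)‖ω‖`; and for the choice
`α = δ/‖ω‖` one gets `‖x_α − x†‖ ≤ √(δ‖ω‖)`. -/
theorem stmt14 {X Y : Type*} [NormedAddCommGroup X] [InnerProductSpace ℝ X] [CompleteSpace X]
    [NormedAddCommGroup Y] [InnerProductSpace ℝ Y] [CompleteSpace Y]
    (F : X →L[ℝ] Y) (ω : Y) (xdag : X)
    (hsource : xdag = ContinuousLinearMap.adjoint F ω)
    (yδ : Y) (δ : ℝ) (hδ : 0 ≤ δ) (hnoise : ‖yδ - F xdag‖ ≤ δ)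
    (α : ℝ) (hα : 0 < α) (xα : X)
    (hxα : ContinuousLinearMap.adjoint F (F xα) + α • xα =
      ContinuousLinearMap.adjoint F yδ) :
    ‖xα - xdag‖ ≤ δ / (2 * Real.sqrt α) + (Real.sqrt α / 2) * ‖ω‖ ∧
    (α = δ / ‖ω‖ → ‖xα - xdag‖ ≤ Real.sqrt (δ * ‖ω‖)) :=
  stmt14_general F ω xdag hsource yδ δ hnoise α hα xα hxα
end

section
/- Let σ be a bounded sigmoidal function, Ω_Y ⊆ ℝⁿ bounded, and V a compact subset of C(Ω̄_Y). Then for every ε > 0 there exist N ∈ ℕ, vectors w_j ∈ ℝⁿ and ζ_j ∈ ℝ (independent of the target function) such that for every y ∈ V there are coefficients c_j(y) ∈ ℝ with sup_{t ∈ Ω̄_Y} |y(t) − Σ_{j=1}^N c_j(y) σ(w_jᵀt + ζ_j)| < ε. -/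
/-! Ridge functions `t ↦ σ (⟪w, t⟫ + ζ)` span a dense subspace of `C(K, ℝ)` for compact `K`.
In one variable, a continuous `G` is uniformly close to a staircase
`G A + ∑ⱼ (G xⱼ₊₁ - G xⱼ) σ (M (x - cⱼ))`, because a steep sigmoid is close to a Heaviside step
away from its jump; hence every exponential ridge `exp ⟪w, t⟫` lies in the closure of the span.
These exponentials form a multiplicative monoid that separates points, so by Stone–Weierstrass
their span, and with it the span of the ridge functions, is dense. Finally, compactness of `V`
makes finitely many ridge functions suffice for all targets at once: `V` is covered by the
directed family of `ε`-thickenings of spans of finite sets of ridge functions. -/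

open RealInnerProductSpace
open Filter Topology Set Metric Submodule Finset

theorem IsCompact.exists_fin_forall_dist_sum_smul_lt {R F : Type*} [Semiring R] [PseudoMetricSpace F]
    [AddCommMonoid F] [Module R F] {D : Set F} (hD : Dense (span R D : Set F)) {V : Set F}
    (hV : IsCompact V) {ε : ℝ} (hε : 0 < ε) :
    ∃ (N : ℕ) (g : Fin N → F), (∀ j, g j ∈ D) ∧
      ∀ y ∈ V, ∃ c : Fin N → R, dist y (∑ j, c j • g j) < ε := by
  have hcover : V ⊆ ⋃ s : {s : Set F // s.Finite ∧ s ⊆ D}, thickening ε (span R s.1 : Set F) := by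
    intro y _
    obtain ⟨z, hz, hyz⟩ := Metric.mem_closure_iff.1 (hD y) ε hε
    obtain ⟨s, hsD, hzs⟩ := mem_span_finite_of_mem_span hz
    exact mem_iUnion.2 ⟨⟨s, s.finite_toSet, hsD⟩, mem_thickening_iff.2 ⟨z, hzs, hyz⟩⟩
  have hdir : Directed (· ⊆ ·) fun s : {s : Set F // s.Finite ∧ s ⊆ D} =>
      thickening ε (span R s.1 : Set F) := fun s t =>
    ⟨⟨s.1 ∪ t.1, s.2.1.union t.2.1, union_subset s.2.2 t.2.2⟩,
      thickening_subset_of_subset ε (span_mono subset_union_left),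
      thickening_subset_of_subset ε (span_mono subset_union_right)⟩
  have : Nonempty {s : Set F // s.Finite ∧ s ⊆ D} := ⟨⟨∅, finite_empty, empty_subset D⟩⟩
  obtain ⟨⟨s, hs_fin, hsD⟩, hVs⟩ :=
    hV.elim_directed_cover _ (fun _ => isOpen_thickening) hcover hdir
  obtain ⟨N, g, -, rfl⟩ := hs_fin.fin_param
  refine ⟨N, g, fun j => hsD (mem_range_self j), fun y hy => ?_⟩
  obtain ⟨z, hz, hyz⟩ := mem_thickening_iff.1 (hVs hy)
  obtain ⟨c, rfl⟩ := (mem_span_range_iff_exists_fun R).1 hz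
  exact ⟨c, hyz⟩

theorem exists_forall_sigmoid_mul_near_step {σ : ℝ → ℝ} (hσ_top : Tendsto σ atTop (𝓝 1))
    (hσ_bot : Tendsto σ atBot (𝓝 0)) {η h : ℝ} (hη : 0 < η) (hh : 0 < h) :
    ∃ M : ℝ, (∀ u, h ≤ u → |σ (M * u) - 1| ≤ η) ∧ (∀ u, u ≤ -h → |σ (M * u)| ≤ η) := by
  obtain ⟨u₁, hu₁⟩ := eventually_atTop.1 (hσ_top.eventually (closedBall_mem_nhds 1 hη))
  obtain ⟨u₀, hu₀⟩ := eventually_atBot.1 (hσ_bot.eventually (closedBall_mem_nhds 0 hη))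
  set M := (|u₁| + |u₀|) / h
  have hMh : M * h = |u₁| + |u₀| := div_mul_cancel₀ _ hh.ne'
  have hM : 0 ≤ M := by positivity
  refine ⟨M, fun u hu => ?_, fun u hu => ?_⟩
  · have : u₁ ≤ M * u := by
      nlinarith [le_abs_self u₁, abs_nonneg u₀, mul_le_mul_of_nonneg_left hu hM]
    simpa [← Real.dist_eq] using hu₁ _ this
  · have : M * u ≤ u₀ := by
      nlinarith [neg_abs_le u₀, abs_nonneg u₁, mul_le_mul_of_nonneg_left hu hM]
    simpa [← Real.dist_eq] using hu₀ _ this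

theorem exists_le_mem_Icc_succ {α : Type*} [LinearOrder α] {X : ℕ → α} {x : α} (hx : X 0 ≤ x) :
    ∀ {m : ℕ}, x ≤ X (m + 1) → ∃ k ≤ m, x ∈ Icc (X k) (X (k + 1))
  | 0, hxm => ⟨0, le_rfl, hx, hxm⟩
  | m + 1, hxm => by
    by_cases hxm' : x ≤ X (m + 1)
    · obtain ⟨k, hkm, hk⟩ := exists_le_mem_Icc_succ hx hxm'
      exact ⟨k, hkm.trans m.le_succ, hk⟩
    · exact ⟨m + 1, le_rfl, (not_le.1 hxm').le, hxm⟩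

theorem abs_sigmoid_sub_step_le {σ : ℝ → ℝ} {X : ℕ → ℝ} {h Mb M η x : ℝ} {j k : ℕ}
    (hX_mono : Monotone X) (hX : ∀ i, X (i + 1) = X i + h) (hMb : ∀ t, |σ t| ≤ Mb) (hη : 0 ≤ η)
    (hM_one : ∀ u, h / 2 ≤ u → |σ (M * u) - 1| ≤ η) (hM_zero : ∀ u ≤ -(h / 2), |σ (M * u)| ≤ η)
    (hx : x ∈ Icc (X k) (X (k + 1))) :
    |σ (M * (x - (X j + h / 2))) - if j < k then 1 else 0| ≤ η + if j = k then Mb else 0 := by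
  rcases lt_trichotomy j k with hjk | rfl | hjk
  · have := hX_mono (show j + 1 ≤ k from hjk)
    rw [hX] at this
    simp only [if_pos hjk, if_neg hjk.ne, add_zero]
    exact hM_one _ (by linarith [hx.1])
  · simp only [lt_irrefl, if_false, if_true, sub_zero]
    linarith [hMb (M * (x - (X j + h / 2)))]
  · have := hX_mono (show k + 1 ≤ j from hjk)
    simp only [if_neg (not_lt.2 hjk.le), if_neg hjk.ne', add_zero, sub_zero]
    exact hM_zero _ (by linarith [hx.2])

/- The three error terms: `G` varies by at most `ε₁` on the cell of `x`, each of the `m + 1`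
sigmoids centred outside that cell is `η`-close to its step, and the one centred inside it is only
bounded by `Mb`. -/
theorem abs_sub_sigmoid_staircase_le {σ G : ℝ → ℝ} {X : ℕ → ℝ} {h Mb M η ε₁ x : ℝ} {m : ℕ}
    (hh : 0 < h) (hX : ∀ i, X (i + 1) = X i + h) (hMb : ∀ t, |σ t| ≤ Mb) (hη : 0 ≤ η)
    (hM_one : ∀ u, h / 2 ≤ u → |σ (M * u) - 1| ≤ η) (hM_zero : ∀ u ≤ -(h / 2), |σ (M * u)| ≤ η)
    (hG : ∀ y ∈ Icc (X 0) (X (m + 1)), ∀ z ∈ Icc (X 0) (X (m + 1)), |y - z| ≤ h →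
      |G y - G z| ≤ ε₁)
    (hx : x ∈ Icc (X 0) (X (m + 1))) :
    |G x - (G (X 0) + ∑ j ∈ range (m + 1),
      (G (X (j + 1)) - G (X j)) * σ (M * (x - (X j + h / 2))))| ≤
      ε₁ * (1 + (m + 1) * η + Mb) := by
  have hX_mono : Monotone X := monotone_nat_of_le_succ fun i => by linarith [hX i]
  have hX_mem : ∀ i ≤ m + 1, X i ∈ Icc (X 0) (X (m + 1)) := fun i hi =>
    ⟨hX_mono (Nat.zero_le i), hX_mono hi⟩
  have hε₁ : 0 ≤ ε₁ := (abs_nonneg _).trans (hG x hx x hx (by simpa using hh.le))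
  obtain ⟨k, hkm, hXk, hxk⟩ := exists_le_mem_Icc_succ hx.1 hx.2
  set Δ : ℕ → ℝ := fun j => G (X (j + 1)) - G (X j)
  set s : ℕ → ℝ := fun j => σ (M * (x - (X j + h / 2)))
  set e : ℕ → ℝ := fun j => if j < k then 1 else 0
  have hΔ : ∀ j ∈ range (m + 1), |Δ j| ≤ ε₁ := fun j hj => by
    rw [Finset.mem_range] at hj
    refine hG _ (hX_mem _ (by omega)) _ (hX_mem _ hj.le) (le_of_eq ?_)
    rw [hX, add_sub_cancel_left, abs_of_pos hh]
  have htel : ∑ j ∈ range (m + 1), Δ j * e j = G (X k) - G (X 0) := by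
    have hfilter : (range (m + 1)).filter (· < k) = range k := by
      ext j; simp only [mem_filter, Finset.mem_range]; omega
    simp only [e, mul_ite, mul_one, mul_zero]
    rw [← sum_filter, hfilter, sum_range_sub (fun i => G (X i))]
  have hstep : ∀ j, |s j - e j| ≤ η + if j = k then Mb else 0 := fun j =>
    abs_sigmoid_sub_step_le hX_mono hX hMb hη hM_one hM_zero ⟨hXk, hxk⟩
  calc |G x - (G (X 0) + ∑ j ∈ range (m + 1), Δ j * s j)|
      = |(G x - G (X k)) - ∑ j ∈ range (m + 1), Δ j * (s j - e j)| := by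
        simp only [mul_sub, sum_sub_distrib, htel]; ring_nf
    _ ≤ |G x - G (X k)| + ∑ j ∈ range (m + 1), |Δ j| * |s j - e j| := by
        refine (abs_sub _ _).trans ?_
        gcongr
        exact (abs_sum_le_sum_abs _ _).trans_eq (by simp only [abs_mul])
    _ ≤ ε₁ + ∑ j ∈ range (m + 1), ε₁ * (η + if j = k then Mb else 0) := by
        gcongr with j hj
        · refine hG _ hx _ (hX_mem _ (by omega)) ?_
          rw [abs_of_nonneg (by linarith)]
          linarith [hX k]
        · exact hΔ j hj
        · exact hstep j
    _ = ε₁ * (1 + (m + 1) * η + Mb) := by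
        rw [← mul_sum, sum_add_distrib, sum_const, card_range, sum_ite_eq',
          if_pos (Finset.mem_range.2 (by omega)), nsmul_eq_mul]
        push_cast; ring

theorem exists_sum_sigmoid_approx_Icc {σ : ℝ → ℝ} (hσ_bdd : ∃ Mb, ∀ t, |σ t| ≤ Mb)
    (hσ_top : Tendsto σ atTop (𝓝 1)) (hσ_bot : Tendsto σ atBot (𝓝 0))
    {G : ℝ → ℝ} {A B : ℝ} (hG : ContinuousOn G (Icc A B)) (hAB : A < B) {ε : ℝ} (hε : 0 < ε) :
    ∃ (m : ℕ) (a b c : Fin m → ℝ), ∀ x ∈ Icc A B, |G x - ∑ j, c j * σ (a j * x + b j)| ≤ ε := by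
  obtain ⟨Mb, hMb⟩ := hσ_bdd
  have hMb0 : 0 ≤ Mb := (abs_nonneg _).trans (hMb 0)
  obtain ⟨δ, hδ, hGδ⟩ := uniformContinuousOn_iff_le.1
    (isCompact_Icc.uniformContinuousOn_of_continuous hG) (ε / (Mb + 2)) (by positivity)
  obtain ⟨m, hm⟩ := exists_nat_gt ((B - A) / δ)
  set h := (B - A) / (m + 1)
  have hh : 0 < h := div_pos (sub_pos.2 hAB) (by positivity)
  have hhδ : h ≤ δ := by
    rw [div_lt_iff₀ hδ] at hm
    rw [div_le_iff₀ (by positivity)]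
    nlinarith
  set X : ℕ → ℝ := fun i => A + i * h
  have hX_zero : X 0 = A := by simp [X]
  have hX_last : X (m + 1) = B := by simp only [X, h]; push_cast; field_simp; ring
  obtain ⟨M, hM_one, hM_zero⟩ := exists_forall_sigmoid_mul_near_step hσ_top hσ_bot
    (η := 1 / (m + 1)) (by positivity) (half_pos hh)
  obtain ⟨b₀, hb₀⟩ : ∃ b₀, σ b₀ ≠ 0 := (hσ_top.eventually (eventually_ne_nhds one_ne_zero)).exists
  refine ⟨m + 2, Fin.cons 0 fun _ => M, Fin.cons b₀ fun j => -(M * (X j + h / 2)),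
    Fin.cons (G A / σ b₀) fun j => G (X (j + 1)) - G (X j), fun x hx => ?_⟩
  have key := abs_sub_sigmoid_staircase_le (G := G) (X := X) (m := m) hh
    (fun i => by simp only [X]; push_cast; ring) hMb (by positivity) hM_one hM_zero
    (by rw [hX_zero, hX_last]; exact fun y hy z hz hyz => hGδ y hy z hz (hyz.trans hhδ))
    (by rwa [hX_zero, hX_last])
  rw [Fin.sum_univ_succ]
  simp only [Fin.cons_zero, Fin.cons_succ, zero_mul, zero_add, div_mul_cancel₀ _ hb₀]
  rw [Fin.sum_univ_eq_sum_range
    (fun j => (G (X (j + 1)) - G (X j)) * σ (M * x + -(M * (X j + h / 2))))]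
  simp only [← sub_eq_add_neg, ← mul_sub, hX_zero] at key ⊢
  refine key.trans_eq ?_
  field_simp
  ring

section Ridge

variable {E : Type*} [NormedAddCommGroup E] [InnerProductSpace ℝ E] {K : Set E} {σ : ℝ → ℝ}

def ridgeFunctions (σ : ℝ → ℝ) (K : Set E) : Set C(K, ℝ) :=
  {f | ∃ (w : E) (ζ : ℝ), ∀ t : K, f t = σ (⟪w, (t : E)⟫ + ζ)}

noncomputable def expRidge (K : Set E) : Multiplicative E →* C(K, ℝ) where
  toFun w := ⟨fun t => Real.exp ⟪w.toAdd, (t : E)⟫, by fun_prop⟩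
  map_one' := by ext; simp
  map_mul' _ _ := by ext; simp [inner_add_left, Real.exp_add]

theorem separatesPoints_adjoin_expRidge (K : Set E) :
    (Algebra.adjoin ℝ (MonoidHom.mrange (expRidge K) : Set C(K, ℝ))).SeparatesPoints := by
  intro t₁ t₂ hne
  refine ⟨_, ⟨expRidge K (.ofAdd ((t₁ : E) - t₂)), Algebra.subset_adjoin ⟨_, rfl⟩, rfl⟩,
    fun heq => hne (Subtype.ext (sub_eq_zero.1 ((inner_self_eq_zero (𝕜 := ℝ)).1 ?_)))⟩
  simp only [expRidge, MonoidHom.coe_mk, OneHom.coe_mk, ContinuousMap.coe_mk, toAdd_ofAdd,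
    Real.exp_eq_exp] at heq
  rw [inner_sub_right, heq, sub_self]

theorem expRidge_mem_closure_span_ridgeFunctions [CompactSpace K] (hσ : Continuous σ)
    (hσ_bdd : ∃ Mb, ∀ t, |σ t| ≤ Mb) (hσ_top : Tendsto σ atTop (𝓝 1))
    (hσ_bot : Tendsto σ atBot (𝓝 0)) (w : Multiplicative E) :
    expRidge K w ∈ closure (span ℝ (ridgeFunctions σ K) : Set C(K, ℝ)) := by
  set φ : C(K, ℝ) := ⟨fun t => ⟪w.toAdd, (t : E)⟫, by fun_prop⟩
  set C := ‖φ‖ + 1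
  have hφ : ∀ t, φ t ∈ Icc (-C) C := fun t =>
    abs_le.1 ((φ.norm_coe_le_norm t).trans (le_add_of_nonneg_right zero_le_one))
  rw [Metric.mem_closure_iff]
  intro ε hε
  obtain ⟨m, a, b, c, habc⟩ := exists_sum_sigmoid_approx_Icc hσ_bdd hσ_top hσ_bot
    Real.continuous_exp.continuousOn (by linarith [norm_nonneg φ] : -C < C) (half_pos hε)
  set g : Fin m → C(K, ℝ) := fun j => ⟨fun t => σ (⟪a j • w.toAdd, (t : E)⟫ + b j), by fun_prop⟩
  refine ⟨∑ j, c j • g j, sum_mem fun j _ => smul_mem _ _ (subset_span ⟨_, _, fun _ => rfl⟩),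
    ((ContinuousMap.dist_le (half_pos hε).le).2 fun t => ?_).trans_lt (half_lt_self hε)⟩
  simpa [g, expRidge, φ, real_inner_smul_left, Real.dist_eq] using habc (φ t) (hφ t)

theorem dense_span_ridgeFunctions [CompactSpace K] (hσ : Continuous σ)
    (hσ_bdd : ∃ Mb, ∀ t, |σ t| ≤ Mb) (hσ_top : Tendsto σ atTop (𝓝 1))
    (hσ_bot : Tendsto σ atBot (𝓝 0)) :
    Dense (span ℝ (ridgeFunctions σ K) : Set C(K, ℝ)) := by
  set A := Algebra.adjoin ℝ (MonoidHom.mrange (expRidge K) : Set C(K, ℝ))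
  have hA : (A : Set C(K, ℝ)) ⊆ closure (span ℝ (ridgeFunctions σ K)) := by
    intro f hf
    have hf' : f ∈ span ℝ (MonoidHom.mrange (expRidge K) : Set C(K, ℝ)) := by
      rwa [← Submonoid.closure_eq (MonoidHom.mrange (expRidge K)), ← Algebra.adjoin_eq_span]
    refine span_le (p := (span ℝ (ridgeFunctions σ K)).topologicalClosure).2 ?_ hf'
    rintro _ ⟨w, rfl⟩
    exact expRidge_mem_closure_span_ridgeFunctions hσ hσ_bdd hσ_top hσ_bot w
  have hA_top := ContinuousMap.subalgebra_topologicalClosure_eq_top_of_separatesPoints A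
    (separatesPoints_adjoin_expRidge K)
  refine fun f => closure_minimal hA isClosed_closure ?_
  rw [← Subalgebra.topologicalClosure_coe, hA_top]
  exact Algebra.mem_top

end Ridge

theorem stmt18_general {n : ℕ} (σ : ℝ → ℝ)
    (hσ_bdd : ∃ Mb : ℝ, ∀ t : ℝ, |σ t| ≤ Mb)
    (hσ_diff : Differentiable ℝ σ)
    (hσ_top : Filter.Tendsto σ Filter.atTop (nhds 1))
    (hσ_bot : Filter.Tendsto σ Filter.atBot (nhds 0))
    (ΩY : Set (EuclideanSpace ℝ (Fin n)))
    (hΩY_bdd : Bornology.IsBounded ΩY)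
    (V : Set C(closure ΩY, ℝ)) (hV : IsCompact V) :
    ∀ ε : ℝ, 0 < ε →
      ∃ (N : ℕ) (w : Fin N → EuclideanSpace ℝ (Fin n)) (ζ : Fin N → ℝ),
        ∀ y ∈ V, ∃ c : Fin N → ℝ,
          ∀ t : closure ΩY,
            |y t - ∑ j, c j * σ (⟪w j, (t : EuclideanSpace ℝ (Fin n))⟫ + ζ j)| < ε := by
  intro ε hε
  have : CompactSpace (closure ΩY) := isCompact_iff_compactSpace.1 hΩY_bdd.isCompact_closure
  obtain ⟨N, g, hg_ridge, hg_approx⟩ := hV.exists_fin_forall_dist_sum_smul_lt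
    (dense_span_ridgeFunctions hσ_diff.continuous hσ_bdd hσ_top hσ_bot) hε
  choose w ζ hwζ using hg_ridge
  refine ⟨N, w, ζ, fun y hy => ?_⟩
  obtain ⟨c, hc⟩ := hg_approx y hy
  refine ⟨c, fun t => lt_of_le_of_lt ?_ hc⟩
  simpa [Real.dist_eq, hwζ] using y.dist_apply_le_dist (g := ∑ j, c j • g j) t

/-- universal approximation of functions on a compact set, uniformly over a
compact family `V ⊆ C(Ω̄_Y)`: for a bounded sigmoidal `σ` and every `ε > 0` there exist
`N`, inner weights `w_j ∈ ℝⁿ`, `ζ_j ∈ ℝ` (independent of the target) such that every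
`y ∈ V` admits outer coefficients `c_j(y)` with
`sup_{t ∈ Ω̄_Y} |y(t) − ∑_j c_j σ(w_jᵀ t + ζ_j)| < ε`. -/
theorem stmt18 {n : ℕ} (σ : ℝ → ℝ)
    (hσ_bdd : ∃ Mb : ℝ, ∀ t : ℝ, |σ t| ≤ Mb)
    (hσ_mono : StrictMono σ) (hσ_diff : Differentiable ℝ σ)
    (hσ_top : Filter.Tendsto σ Filter.atTop (nhds 1))
    (hσ_bot : Filter.Tendsto σ Filter.atBot (nhds 0))
    (ΩY : Set (EuclideanSpace ℝ (Fin n))) (hΩY_open : IsOpen ΩY) (hΩY_ne : ΩY.Nonempty)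
    (hΩY_bdd : Bornology.IsBounded ΩY)
    (V : Set C(closure ΩY, ℝ)) (hV : IsCompact V) :
    ∀ ε : ℝ, 0 < ε →
      ∃ (N : ℕ) (w : Fin N → EuclideanSpace ℝ (Fin n)) (ζ : Fin N → ℝ),
        ∀ y ∈ V, ∃ c : Fin N → ℝ,
          ∀ t : closure ΩY,
            |y t - ∑ j, c j * σ (⟪w j, (t : EuclideanSpace ℝ (Fin n))⟫ + ζ j)| < ε :=
  stmt18_general σ hσ_bdd hσ_diff hσ_top hσ_bot ΩY hΩY_bdd V hV
end
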